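/- arXiv:1906.07065 — 8 statements merged into one kernel-verified Lean document; each statement's English description precedes it below -/
import Mathlib

section
/- Let Λ and Γ be g-Bessel sequences for H and let U ∈ B(ℓ²(⊕_i K_i)). If the generalized multiplier M_{U,Λ,Γ} = T_Λ U T_Γ* is invertible on H, then there exist constants c > 0 such that c‖x‖² ≤ Σ_i ‖Λ_i x‖² and c‖x‖² ≤ Σ_i ‖Γ_i x‖² for all x ∈ H; i.e., both Λ and Γ satisfy the lower g-frame condition. -/
/-!
Invertibility of `M = T_Λ U T_Γ*` gives the right inverse `U T_Γ* M⁻¹` of `T_Λ` and the left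
inverse `M⁻¹ T_Λ U` of `T_Γ*`. Taking adjoints, both analysis operators `T_Λ*` and `T_Γ*` have
bounded left inverses, hence are bounded below; since `‖T_Λ* x‖² = ∑ ‖Λ_i x‖²`, this is the lower
g-frame bound.
-/

open ContinuousLinearMap

lemma lp.norm_sq_eq_tsum {ι : Type*} {E : ι → Type*} [∀ i, NormedAddCommGroup (E i)]
    (f : lp E 2) : ‖f‖ ^ 2 = ∑' i, ‖f i‖ ^ 2 := by
  simpa using lp.norm_rpow_eq_tsum (p := 2) (by norm_num) f

namespace ContinuousLinearMap

variable {𝕜 E F : Type*} [RCLike 𝕜] [NormedAddCommGroup E] [NormedSpace 𝕜 E]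
  [NormedAddCommGroup F] [NormedSpace 𝕜 F]

lemma exists_pos_mul_norm_sq_le_of_comp_eq_id {A : F →L[𝕜] E} {B : E →L[𝕜] F}
    (hAB : A ∘L B = .id 𝕜 E) : ∃ c : ℝ, 0 < c ∧ ∀ x, c * ‖x‖ ^ 2 ≤ ‖B x‖ ^ 2 := by
  refine ⟨((‖A‖ + 1) ^ 2)⁻¹, by positivity, fun x => ?_⟩
  have hx : ‖x‖ ≤ (‖A‖ + 1) * ‖B x‖ :=
    calc ‖x‖ = ‖A (B x)‖ := by rw [← comp_apply, hAB, id_apply]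
      _ ≤ ‖A‖ * ‖B x‖ := A.le_opNorm _
      _ ≤ (‖A‖ + 1) * ‖B x‖ := by gcongr; linarith
  rw [inv_mul_le_iff₀ (by positivity), ← mul_pow]
  gcongr

end ContinuousLinearMap

lemma exists_lower_gFrame_bound_of_comp_adjoint_eq_id
    {ι H : Type*} {K : ι → Type*}
    [NormedAddCommGroup H] [InnerProductSpace ℂ H] [CompleteSpace H]
    [∀ i, NormedAddCommGroup (K i)] [∀ i, InnerProductSpace ℂ (K i)] [∀ i, CompleteSpace (K i)]
    {Λ : ∀ i, H →L[ℂ] K i} {T : lp K 2 →L[ℂ] H} (hT : ∀ x i, (adjoint T x) i = Λ i x)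
    {A : lp K 2 →L[ℂ] H} (hA : A ∘L adjoint T = .id ℂ H) :
    ∃ c : ℝ, 0 < c ∧ ∀ x, c * ‖x‖ ^ 2 ≤ ∑' i, ‖Λ i x‖ ^ 2 := by
  obtain ⟨c, hc, hbound⟩ := exists_pos_mul_norm_sq_le_of_comp_eq_id hA
  refine ⟨c, hc, fun x => ?_⟩
  simpa only [lp.norm_sq_eq_tsum, hT] using hbound x

theorem invertible_multiplier_lower_frame_condition_general
    {ι H : Type*} {K : ι → Type*}
    [NormedAddCommGroup H] [InnerProductSpace ℂ H] [CompleteSpace H]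
    [∀ i, NormedAddCommGroup (K i)] [∀ i, InnerProductSpace ℂ (K i)]
    [∀ i, CompleteSpace (K i)]
    (Λ Γ : ∀ i, H →L[ℂ] K i)
    (TΛ TΓ : lp K 2 →L[ℂ] H)
    (hTΛ : ∀ x : H, ∀ i, (adjoint TΛ x) i = Λ i x)
    (hTΓ : ∀ x : H, ∀ i, (adjoint TΓ x) i = Γ i x)
    (U : lp K 2 →L[ℂ] lp K 2)
    (hM : IsUnit (TΛ.comp (U.comp (adjoint TΓ)))) :
    ∃ c : ℝ, 0 < c ∧
      (∀ x : H, c * ‖x‖ ^ 2 ≤ ∑' i, ‖Λ i x‖ ^ 2) ∧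
      (∀ x : H, c * ‖x‖ ^ 2 ≤ ∑' i, ‖Γ i x‖ ^ 2) := by
  obtain ⟨M, hMdef⟩ := hM
  have hΓ_left_inv : (↑M⁻¹ ∘L TΛ ∘L U) ∘L adjoint TΓ = .id ℂ H := by
    simp only [comp_assoc]
    rw [← hMdef, ← mul_def, M.inv_mul, one_def]
  have hM_right_inv : (TΛ ∘L U ∘L adjoint TΓ) ∘L ↑M⁻¹ = .id ℂ H := by
    rw [← hMdef, ← mul_def, M.mul_inv, one_def]
  have hΛ_left_inv : adjoint (U ∘L adjoint TΓ ∘L ↑M⁻¹) ∘L adjoint TΛ = .id ℂ H := by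
    rw [← adjoint_comp, ← adjoint_id]
    simpa only [comp_assoc] using congr(adjoint $hM_right_inv)
  obtain ⟨cΛ, hcΛ, hΛ⟩ := exists_lower_gFrame_bound_of_comp_adjoint_eq_id hTΛ hΛ_left_inv
  obtain ⟨cΓ, hcΓ, hΓ⟩ := exists_lower_gFrame_bound_of_comp_adjoint_eq_id hTΓ hΓ_left_inv
  refine ⟨min cΛ cΓ, lt_min hcΛ hcΓ, fun x => ?_, fun x => ?_⟩
  · exact (mul_le_mul_of_nonneg_right (min_le_left _ _) (by positivity)).trans (hΛ x)
  · exact (mul_le_mul_of_nonneg_right (min_le_right _ _) (by positivity)).trans (hΓ x)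

/-- If a generalized multiplier M_{U,Λ,Γ} = T_Λ U T_Γ* of two
g-Bessel sequences is invertible, then both Λ and Γ satisfy the lower
g-frame condition. -/
theorem invertible_multiplier_lower_frame_condition
    {ι H : Type*} {K : ι → Type*}
    [NormedAddCommGroup H] [InnerProductSpace ℂ H] [CompleteSpace H]
    [∀ i, NormedAddCommGroup (K i)] [∀ i, InnerProductSpace ℂ (K i)]
    [∀ i, CompleteSpace (K i)]
    (Λ Γ : ∀ i, H →L[ℂ] K i) (BΛ BΓ : ℝ)
    (hsumΛ : ∀ x : H, Summable fun i => ‖Λ i x‖ ^ 2)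
    (hBesselΛ : ∀ x : H, (∑' i, ‖Λ i x‖ ^ 2) ≤ BΛ * ‖x‖ ^ 2)
    (hsumΓ : ∀ x : H, Summable fun i => ‖Γ i x‖ ^ 2)
    (hBesselΓ : ∀ x : H, (∑' i, ‖Γ i x‖ ^ 2) ≤ BΓ * ‖x‖ ^ 2)
    (TΛ TΓ : lp K 2 →L[ℂ] H)
    (hTΛ : ∀ x : H, ∀ i, (adjoint TΛ x) i = Λ i x)
    (hTΓ : ∀ x : H, ∀ i, (adjoint TΓ x) i = Γ i x)
    (U : lp K 2 →L[ℂ] lp K 2)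
    (hM : IsUnit (TΛ.comp (U.comp (adjoint TΓ)))) :
    ∃ c : ℝ, 0 < c ∧
      (∀ x : H, c * ‖x‖ ^ 2 ≤ ∑' i, ‖Λ i x‖ ^ 2) ∧
      (∀ x : H, c * ‖x‖ ^ 2 ≤ ∑' i, ‖Γ i x‖ ^ 2) :=
  invertible_multiplier_lower_frame_condition_general Λ Γ TΛ TΓ hTΛ hTΓ U hM
end

section
/- Let Λ be a g-Bessel sequence for H, let U ∈ B(ℓ²(⊕_i K_i)) be a diagonal operator with entries u_i ∈ B(K_i), and let Γ be a g-Bessel sequence such that T := M_{U,Λ,Γ} = T_Λ U T_Γ* is invertible. Then the operator Φ := U T_Γ* − T_Λ* S_Λ^{-1} T satisfies T_Λ Φ = 0, and consequently u_i Γ_i = Λ_i S_Λ^{-1} T + π_i Φ for all i ∈ I, where π_i is the i-th coordinate projection of ℓ²(⊕_i K_i). -/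
open ContinuousLinearMap

theorem ContinuousLinearMap.comp_sub_comp_comp_eq_zero_of_comp_eq_id
    {R E F G : Type*} [Ring R]
    [TopologicalSpace E] [AddCommGroup E] [Module R E]
    [TopologicalSpace F] [AddCommGroup F] [Module R F] [IsTopologicalAddGroup F]
    [TopologicalSpace G] [AddCommGroup G] [Module R G] [IsTopologicalAddGroup G]
    {A : F →L[R] G} {P : G →L[R] F} (hAP : A.comp P = ContinuousLinearMap.id R G)
    (B : E →L[R] F) :
    A.comp (B - P.comp (A.comp B)) = 0 := by
  rw [comp_sub, ← comp_assoc, hAP, id_comp, sub_self]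

theorem construct_gBessel_for_invertible_multiplier_general
    {ι H : Type*} {K : ι → Type*}
    [NormedAddCommGroup H] [InnerProductSpace ℂ H] [CompleteSpace H]
    [∀ i, NormedAddCommGroup (K i)] [∀ i, InnerProductSpace ℂ (K i)]
    [∀ i, CompleteSpace (K i)]
    (Λ Γ : ∀ i, H →L[ℂ] K i)
    (TΛ TΓ : lp K 2 →L[ℂ] H)
    (hTΛ : ∀ x : H, ∀ i, (adjoint TΛ x) i = Λ i x)
    (hTΓ : ∀ x : H, ∀ i, (adjoint TΓ x) i = Γ i x)
    (u : ∀ i, K i →L[ℂ] K i) (U : lp K 2 →L[ℂ] lp K 2)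
    (hU : ∀ f : lp K 2, ∀ i, (U f) i = u i (f i))
    (SΛ' : H →L[ℂ] H)
    (hSΛ'₁ : (TΛ.comp (adjoint TΛ)).comp SΛ' = ContinuousLinearMap.id ℂ H) :
    TΛ.comp ((U.comp (adjoint TΓ)) -
        (adjoint TΛ).comp (SΛ'.comp (TΛ.comp (U.comp (adjoint TΓ))))) = 0 ∧
    ∀ x : H, ∀ i,
      u i (Γ i x) =
        Λ i (SΛ' (TΛ (U (adjoint TΓ x)))) +
        (((U.comp (adjoint TΓ)) -
          (adjoint TΛ).comp (SΛ'.comp (TΛ.comp (U.comp (adjoint TΓ))))) x) i := by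
  have hrightInv : TΛ.comp ((adjoint TΛ).comp SΛ') = ContinuousLinearMap.id ℂ H := by
    rw [← comp_assoc, hSΛ'₁]
  refine ⟨comp_sub_comp_comp_eq_zero_of_comp_eq_id hrightInv _, fun x i => ?_⟩
  rw [← hTΓ, ← hU, ← hTΛ, sub_apply]
  -- coordinates of a difference in `lp` are definitionally the differences of coordinates
  exact (add_sub_cancel _ _).symm

/-- If T = M_{U,Λ,Γ} is invertible, then Φ := U T_Γ* − T_Λ* S_Λ⁻¹ T
satisfies T_Λ Φ = 0, hence u_i Γ_i = Λ_i S_Λ⁻¹ T + π_i Φ for all i. -/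
theorem construct_gBessel_for_invertible_multiplier
    {ι H : Type*} {K : ι → Type*}
    [NormedAddCommGroup H] [InnerProductSpace ℂ H] [CompleteSpace H]
    [∀ i, NormedAddCommGroup (K i)] [∀ i, InnerProductSpace ℂ (K i)]
    [∀ i, CompleteSpace (K i)]
    (Λ Γ : ∀ i, H →L[ℂ] K i) (BΛ BΓ : ℝ)
    (hsumΛ : ∀ x : H, Summable fun i => ‖Λ i x‖ ^ 2)
    (hBesselΛ : ∀ x : H, (∑' i, ‖Λ i x‖ ^ 2) ≤ BΛ * ‖x‖ ^ 2)
    (hsumΓ : ∀ x : H, Summable fun i => ‖Γ i x‖ ^ 2)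
    (hBesselΓ : ∀ x : H, (∑' i, ‖Γ i x‖ ^ 2) ≤ BΓ * ‖x‖ ^ 2)
    (TΛ TΓ : lp K 2 →L[ℂ] H)
    (hTΛ : ∀ x : H, ∀ i, (adjoint TΛ x) i = Λ i x)
    (hTΓ : ∀ x : H, ∀ i, (adjoint TΓ x) i = Γ i x)
    (u : ∀ i, K i →L[ℂ] K i) (U : lp K 2 →L[ℂ] lp K 2)
    (hU : ∀ f : lp K 2, ∀ i, (U f) i = u i (f i))
    (SΛ' : H →L[ℂ] H)
    (hSΛ'₁ : (TΛ.comp (adjoint TΛ)).comp SΛ' = ContinuousLinearMap.id ℂ H)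
    (hSΛ'₂ : SΛ'.comp (TΛ.comp (adjoint TΛ)) = ContinuousLinearMap.id ℂ H)
    (hMinv : IsUnit (TΛ.comp (U.comp (adjoint TΓ)))) :
    TΛ.comp ((U.comp (adjoint TΓ)) -
        (adjoint TΛ).comp (SΛ'.comp (TΛ.comp (U.comp (adjoint TΓ))))) = 0 ∧
    ∀ x : H, ∀ i,
      u i (Γ i x) =
        Λ i (SΛ' (TΛ (U (adjoint TΓ x)))) +
        (((U.comp (adjoint TΓ)) -
          (adjoint TΛ).comp (SΛ'.comp (TΛ.comp (U.comp (adjoint TΓ))))) x) i :=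
  construct_gBessel_for_invertible_multiplier_general Λ Γ TΛ TΓ hTΛ hTΓ u U hU SΛ' hSΛ'₁
end

section
/- Let Λ be a g-Bessel sequence, Γ a g-frame, and U bounded with M_{U,Λ,Γ} invertible. Define V := Id − T_Γ* M_{U,Λ,Γ}^{-1} T_Λ U on ℓ²(⊕_i K_i). Then ran(V) = ker(T_Λ U). -/
/-!
Since `(T_Λ U)(T_Γ* M⁻¹) = 1`, the operator `P = T_Γ* M⁻¹ T_Λ U` is idempotent, and its kernel is
that of `T_Λ U` because `T_Γ* M⁻¹` is injective. For an idempotent, `ran (1 - P) = ker P`.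
-/

open ContinuousLinearMap

namespace LinearMap

variable {R E F : Type*} [Ring R] [AddCommGroup E] [Module R E] [AddCommGroup F] [Module R F]
  {A : E →ₗ[R] F} {B : F →ₗ[R] E}

theorem isIdempotentElem_comp_of_comp_eq_id (h : A ∘ₗ B = id) : IsIdempotentElem (B ∘ₗ A) := by
  change (B ∘ₗ A) ∘ₗ (B ∘ₗ A) = B ∘ₗ A
  rw [comp_assoc, ← comp_assoc A, h, id_comp]

theorem range_id_sub_comp_eq_ker_of_comp_eq_id (h : A ∘ₗ B = id) :
    range (id - B ∘ₗ A) = ker A := by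
  rw [← IsIdempotentElem.ker_eq_range (isIdempotentElem_comp_of_comp_eq_id h),
    ker_comp_of_ker_eq_bot A (ker_eq_bot_of_inverse h)]

end LinearMap

theorem range_V_eq_ker_TLambdaU_general
    {ι H : Type*} {K : ι → Type*}
    [NormedAddCommGroup H] [InnerProductSpace ℂ H] [CompleteSpace H]
    [∀ i, NormedAddCommGroup (K i)] [∀ i, InnerProductSpace ℂ (K i)]
    [∀ i, CompleteSpace (K i)]
    (TΛ TΓ : lp K 2 →L[ℂ] H)
    (U : lp K 2 →L[ℂ] lp K 2)
    (M' : H →L[ℂ] H)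
    (hM'₁ : (TΛ.comp (U.comp (adjoint TΓ))).comp M' = ContinuousLinearMap.id ℂ H) :
    ∀ f : lp K 2,
      (f ∈ Set.range
        (ContinuousLinearMap.id ℂ (lp K 2) - (adjoint TΓ).comp (M'.comp (TΛ.comp U))))
      ↔ TΛ (U f) = 0 := by
  have hinv : ((TΛ.comp U).comp ((adjoint TΓ).comp M') : H →ₗ[ℂ] H) = LinearMap.id := by
    simpa only [comp_assoc, coe_id] using congrArg ContinuousLinearMap.toLinearMap hM'₁
  exact SetLike.ext_iff.mp (LinearMap.range_id_sub_comp_eq_ker_of_comp_eq_id hinv)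

/-- For V := Id − T_Γ* M⁻¹ T_Λ U with M = M_{U,Λ,Γ} invertible,
one has ran(V) = ker(T_Λ U). -/
theorem range_V_eq_ker_TLambdaU
    {ι H : Type*} {K : ι → Type*}
    [NormedAddCommGroup H] [InnerProductSpace ℂ H] [CompleteSpace H]
    [∀ i, NormedAddCommGroup (K i)] [∀ i, InnerProductSpace ℂ (K i)]
    [∀ i, CompleteSpace (K i)]
    (Λ Γ : ∀ i, H →L[ℂ] K i) (BΛ : ℝ) (AΓ BΓ : ℝ) (hAΓ : 0 < AΓ)
    (hsumΛ : ∀ x : H, Summable fun i => ‖Λ i x‖ ^ 2)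
    (hBesselΛ : ∀ x : H, (∑' i, ‖Λ i x‖ ^ 2) ≤ BΛ * ‖x‖ ^ 2)
    (hsumΓ : ∀ x : H, Summable fun i => ‖Γ i x‖ ^ 2)
    (hframeΓ : ∀ x : H, AΓ * ‖x‖ ^ 2 ≤ (∑' i, ‖Γ i x‖ ^ 2) ∧
      (∑' i, ‖Γ i x‖ ^ 2) ≤ BΓ * ‖x‖ ^ 2)
    (TΛ TΓ : lp K 2 →L[ℂ] H)
    (hTΛ : ∀ x : H, ∀ i, (adjoint TΛ x) i = Λ i x)
    (hTΓ : ∀ x : H, ∀ i, (adjoint TΓ x) i = Γ i x)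
    (U : lp K 2 →L[ℂ] lp K 2)
    (M' : H →L[ℂ] H)
    (hM'₁ : (TΛ.comp (U.comp (adjoint TΓ))).comp M' = ContinuousLinearMap.id ℂ H)
    (hM'₂ : M'.comp (TΛ.comp (U.comp (adjoint TΓ))) = ContinuousLinearMap.id ℂ H) :
    ∀ f : lp K 2,
      (f ∈ Set.range
        (ContinuousLinearMap.id ℂ (lp K 2) - (adjoint TΓ).comp (M'.comp (TΛ.comp U))))
      ↔ TΛ (U f) = 0 :=
  range_V_eq_ker_TLambdaU_general TΛ TΓ U M' hM'₁
end

section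
/- Let Λ and Γ be g-Bessel sequences, and let U ∈ B(ℓ²(⊕_i K_i)) be invertible (semi-normalized diagonal). If M_{U,Λ,Γ} = T_Λ U T_Γ* is invertible on H, then dim(ker(T_Γ)) = dim(ker(T_Λ)); i.e., Λ and Γ have the same excess. -/
/-!
With `A := T_Γ*` and `B := T_Λ U`, the operator `B A` is invertible, so `A (B A)⁻¹ B` is an
idempotent with range `ran A` and kernel `ker B`: thus `ℓ² = ran A ⊕ ker B`. Moreover `A` has
the bounded left inverse `(B A)⁻¹ B`, so `ran A` is closed and
`ℓ² = ran A ⊕ (ran A)ᗮ = ran A ⊕ ker T_Γ`.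
Two complements of the same subspace are both isomorphic to the quotient by it, and
`ker B = U⁻¹ (ker T_Λ) ≅ ker T_Λ`.
-/

universe u

namespace LinearMap

variable {R : Type*} [Ring R]

theorem isCompl_range_ker_of_bijective_comp {V W : Type*} [AddCommGroup V] [Module R V]
    [AddCommGroup W] [Module R W] {A : V →ₗ[R] W} {B : W →ₗ[R] V}
    (h : Function.Bijective (B ∘ₗ A)) : IsCompl (range A) (ker B) := by
  set e := LinearEquiv.ofBijective (B ∘ₗ A) h
  have hA : Function.Injective A := fun x y hxy ↦ h.injective (congrArg B hxy)
  have hproj : IsProj (range A) (A ∘ₗ e.symm.toLinearMap ∘ₗ B) := by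
    refine ⟨fun x ↦ mem_range_self A _, ?_⟩
    rintro _ ⟨v, rfl⟩
    exact congrArg A (e.symm_apply_apply v)
  have hker : ker (A ∘ₗ e.symm.toLinearMap ∘ₗ B) = ker B := by
    rw [ker_comp, ker_eq_bot.mpr hA, Submodule.comap_bot, LinearEquiv.ker_comp]
  exact hker ▸ hproj.isCompl

theorem rank_ker_comp_equiv {V W : Type u} {X : Type*} [AddCommGroup V] [Module R V]
    [AddCommGroup W] [Module R W] [AddCommGroup X] [Module R X] (f : W →ₗ[R] X) (e : V ≃ₗ[R] W) :
    Module.rank R (ker (f ∘ₗ e.toLinearMap)) = Module.rank R (ker f) := by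
  rw [ker_comp, Submodule.comap_equiv_eq_map_symm, LinearEquiv.rank_map_eq]

end LinearMap

theorem Submodule.rank_eq_of_isCompl {R V : Type*} [Ring R] [AddCommGroup V] [Module R V]
    {p q q' : Submodule R V} (hq : IsCompl p q) (hq' : IsCompl p q') :
    Module.rank R q = Module.rank R q' :=
  (p.quotientEquivOfIsCompl q hq).rank_eq.symm.trans (p.quotientEquivOfIsCompl q' hq').rank_eq

namespace ContinuousLinearMap

variable {𝕜 E F : Type*} [RCLike 𝕜] [NormedAddCommGroup E] [InnerProductSpace 𝕜 E]
  [CompleteSpace E] [NormedAddCommGroup F] [InnerProductSpace 𝕜 F] [CompleteSpace F]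

theorem rank_ker_adjoint_eq_rank_ker_of_isUnit_comp {A : E →L[𝕜] F} {B : F →L[𝕜] E}
    (h : IsUnit (B ∘L A)) :
    Module.rank 𝕜 (LinearMap.ker (adjoint A : F →ₗ[𝕜] E)) =
      Module.rank 𝕜 (LinearMap.ker (B : F →ₗ[𝕜] E)) := by
  set u := ContinuousLinearEquiv.ofUnit h.unit
  have hleft : A.HasLeftInverse := ⟨(u.symm : E →L[𝕜] E) ∘L B, fun x ↦ u.symm_apply_apply x⟩
  have hclosed : IsClosed (LinearMap.range (A : E →ₗ[𝕜] F) : Set F) := by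
    rw [LinearMap.coe_range]
    exact hleft.isClosed_range
  have : CompleteSpace (LinearMap.range (A : E →ₗ[𝕜] F)) := hclosed.completeSpace_coe
  have horth :
      IsCompl (LinearMap.range (A : E →ₗ[𝕜] F)) (LinearMap.ker (adjoint A : F →ₗ[𝕜] E)) := by
    rw [← orthogonal_range]
    exact Submodule.isCompl_orthogonal _
  exact Submodule.rank_eq_of_isCompl horth
    (LinearMap.isCompl_range_ker_of_bijective_comp u.bijective)

end ContinuousLinearMap

open ContinuousLinearMap

theorem equal_excess_of_invertible_multiplier_general
    {ι H : Type*} {K : ι → Type*}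
    [NormedAddCommGroup H] [InnerProductSpace ℂ H] [CompleteSpace H]
    [∀ i, NormedAddCommGroup (K i)] [∀ i, InnerProductSpace ℂ (K i)]
    [∀ i, CompleteSpace (K i)]
    (TΛ TΓ : lp K 2 →L[ℂ] H)
    (U U' : lp K 2 →L[ℂ] lp K 2)
    (hUU' : U.comp U' = ContinuousLinearMap.id ℂ (lp K 2))
    (hU'U : U'.comp U = ContinuousLinearMap.id ℂ (lp K 2))
    (hM : IsUnit (TΛ.comp (U.comp (adjoint TΓ)))) :
    Module.rank ℂ (LinearMap.ker (TΓ : lp K 2 →ₗ[ℂ] H)) = Module.rank ℂ (LinearMap.ker (TΛ : lp K 2 →ₗ[ℂ] H)) := by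
  let eU : lp K 2 ≃L[ℂ] lp K 2 := .equivOfInverse U U'
    (fun x ↦ congrArg (· x) hU'U) (fun x ↦ congrArg (· x) hUU')
  have h := rank_ker_adjoint_eq_rank_ker_of_isUnit_comp (A := adjoint TΓ) (B := TΛ ∘L U) hM
  rw [adjoint_adjoint] at h
  rw [h]
  exact LinearMap.rank_ker_comp_equiv (TΛ : lp K 2 →ₗ[ℂ] H) eU.toLinearEquiv

/-- For a semi-normalized (invertible) symbol U, invertibility of
M_{U,Λ,Γ} forces the excesses of Λ and Γ to coincide:
dim ker T_Γ = dim ker T_Λ. -/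
theorem equal_excess_of_invertible_multiplier
    {ι H : Type*} {K : ι → Type*}
    [NormedAddCommGroup H] [InnerProductSpace ℂ H] [CompleteSpace H]
    [∀ i, NormedAddCommGroup (K i)] [∀ i, InnerProductSpace ℂ (K i)]
    [∀ i, CompleteSpace (K i)]
    (Λ Γ : ∀ i, H →L[ℂ] K i) (BΛ BΓ : ℝ)
    (hsumΛ : ∀ x : H, Summable fun i => ‖Λ i x‖ ^ 2)
    (hBesselΛ : ∀ x : H, (∑' i, ‖Λ i x‖ ^ 2) ≤ BΛ * ‖x‖ ^ 2)
    (hsumΓ : ∀ x : H, Summable fun i => ‖Γ i x‖ ^ 2)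
    (hBesselΓ : ∀ x : H, (∑' i, ‖Γ i x‖ ^ 2) ≤ BΓ * ‖x‖ ^ 2)
    (TΛ TΓ : lp K 2 →L[ℂ] H)
    (hTΛ : ∀ x : H, ∀ i, (adjoint TΛ x) i = Λ i x)
    (hTΓ : ∀ x : H, ∀ i, (adjoint TΓ x) i = Γ i x)
    (U U' : lp K 2 →L[ℂ] lp K 2)
    (hUU' : U.comp U' = ContinuousLinearMap.id ℂ (lp K 2))
    (hU'U : U'.comp U = ContinuousLinearMap.id ℂ (lp K 2))
    (hM : IsUnit (TΛ.comp (U.comp (adjoint TΓ)))) :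
    Module.rank ℂ (LinearMap.ker (TΓ : lp K 2 →ₗ[ℂ] H)) = Module.rank ℂ (LinearMap.ker (TΛ : lp K 2 →ₗ[ℂ] H)) :=
  equal_excess_of_invertible_multiplier_general TΛ TΓ U U' hUU' hU'U hM
end

section
/- Let Λ be a g-Riesz basis for H (i.e., its synthesis operator T_Λ is a bounded bijection from ℓ²(⊕_i K_i) onto H), let U be an invertible bounded operator on ℓ²(⊕_i K_i), and let Γ be a g-Bessel sequence. Then M_{U,Λ,Γ} = T_Λ U T_Γ* is invertible if and only if Γ is a g-Riesz basis. -/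
/-!
By the open mapping theorem a bounded operator between Banach spaces is invertible iff it is
bijective, and the adjoint of an invertible operator is invertible. Since `T_Λ` and `U` are
bijective, `M = T_Λ U T_Γ*` is therefore invertible iff `T_Γ*` is bijective, iff `T_Γ` is.
-/

open ContinuousLinearMap

namespace ContinuousLinearMap

lemma isInvertible_iff_bijective {𝕜 E F : Type*} [NontriviallyNormedField 𝕜]
    [NormedAddCommGroup E] [NormedSpace 𝕜 E] [CompleteSpace E]
    [NormedAddCommGroup F] [NormedSpace 𝕜 F] [CompleteSpace F] {f : E →L[𝕜] F} :
    f.IsInvertible ↔ Function.Bijective f :=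
  ⟨IsInvertible.bijective, fun h =>
    ⟨.ofBijective f (LinearMap.ker_eq_bot.2 h.1) (LinearMap.range_eq_top.2 h.2), rfl⟩⟩

variable {𝕜 E F : Type*} [RCLike 𝕜]
  [NormedAddCommGroup E] [InnerProductSpace 𝕜 E] [CompleteSpace E]
  [NormedAddCommGroup F] [InnerProductSpace 𝕜 F] [CompleteSpace F]

lemma IsInvertible.adjoint {f : E →L[𝕜] F} (hf : f.IsInvertible) : (adjoint f).IsInvertible := by
  obtain ⟨e, rfl⟩ := hf
  -- unqualified, `adjoint` would refer to this lemma here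
  refine .of_inverse (g := ContinuousLinearMap.adjoint (e.symm : F →L[𝕜] E)) ?_ ?_ <;>
    simp [← adjoint_comp, adjoint_id]

lemma bijective_adjoint_iff {f : E →L[𝕜] F} :
    Function.Bijective (adjoint f) ↔ Function.Bijective f := by
  simp only [← isInvertible_iff_bijective]
  exact ⟨fun h => adjoint_adjoint f ▸ h.adjoint, IsInvertible.adjoint⟩

end ContinuousLinearMap

theorem multiplier_invertible_iff_gRiesz_general
    {ι H : Type*} {K : ι → Type*}
    [NormedAddCommGroup H] [InnerProductSpace ℂ H] [CompleteSpace H]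
    [∀ i, NormedAddCommGroup (K i)] [∀ i, InnerProductSpace ℂ (K i)]
    [∀ i, CompleteSpace (K i)]
    (TΛ TΓ : lp K 2 →L[ℂ] H)
    (hRieszΛ : Function.Bijective TΛ)
    (U U' : lp K 2 →L[ℂ] lp K 2)
    (hUU' : U.comp U' = ContinuousLinearMap.id ℂ (lp K 2))
    (hU'U : U'.comp U = ContinuousLinearMap.id ℂ (lp K 2)) :
    IsUnit (TΛ.comp (U.comp (adjoint TΓ))) ↔ Function.Bijective TΓ := by
  have hU : Function.Bijective U := (IsInvertible.of_inverse hUU' hU'U).bijective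
  rw [isUnit_iff_bijective, ← bijective_adjoint_iff (f := TΓ), coe_comp, coe_comp,
    hRieszΛ.of_comp_iff', hU.of_comp_iff']

/-- If Λ is a g-Riesz basis and U is invertible, then
M_{U,Λ,Γ} is invertible iff Γ is a g-Riesz basis (its synthesis operator is
bijective). -/
theorem multiplier_invertible_iff_gRiesz
    {ι H : Type*} {K : ι → Type*}
    [NormedAddCommGroup H] [InnerProductSpace ℂ H] [CompleteSpace H]
    [∀ i, NormedAddCommGroup (K i)] [∀ i, InnerProductSpace ℂ (K i)]
    [∀ i, CompleteSpace (K i)]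
    (Λ Γ : ∀ i, H →L[ℂ] K i) (BΓ : ℝ)
    (hsumΓ : ∀ x : H, Summable fun i => ‖Γ i x‖ ^ 2)
    (hBesselΓ : ∀ x : H, (∑' i, ‖Γ i x‖ ^ 2) ≤ BΓ * ‖x‖ ^ 2)
    (TΛ TΓ : lp K 2 →L[ℂ] H)
    (hTΛ : ∀ x : H, ∀ i, (adjoint TΛ x) i = Λ i x)
    (hTΓ : ∀ x : H, ∀ i, (adjoint TΓ x) i = Γ i x)
    (hRieszΛ : Function.Bijective TΛ)
    (U U' : lp K 2 →L[ℂ] lp K 2)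
    (hUU' : U.comp U' = ContinuousLinearMap.id ℂ (lp K 2))
    (hU'U : U'.comp U = ContinuousLinearMap.id ℂ (lp K 2)) :
    IsUnit (TΛ.comp (U.comp (adjoint TΓ))) ↔ Function.Bijective TΓ :=
  multiplier_invertible_iff_gRiesz_general TΛ TΓ hRieszΛ U U' hUU' hU'U
end

section
/- Let Λ and Γ be g-Riesz bases for H and U ∈ B(ℓ²(⊕_i K_i)). Then M_{U,Λ,Γ} = T_Λ U T_Γ* is invertible on H if and only if U is invertible; moreover in that case the inverse of M_{U,Λ,Γ} is M_{U^{-1},Γ̃,Λ̃} = T_{Γ̃} U^{-1} T_{Λ̃}*, where Λ̃ = {Λ_i S_Λ^{-1}} and Γ̃ = {Γ_i S_Γ^{-1}} are the canonical duals. -/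
/-!
For a g-Riesz basis the synthesis operator `T` is an isomorphism `ℓ²(⊕ Kᵢ) ≃ H`. The inverse of the
self-adjoint frame operator `S = TT†` is self-adjoint, so `(S⁻¹T)† = T†S⁻¹`, which is a right inverse
of `T` and hence, `T` being injective, its inverse; dually `(T†)⁻¹ = S⁻¹T`. Thus `M = T_Λ U T_Γ†` is
`U` sandwiched between isomorphisms, whose inverses are the canonical-dual operators.
-/

theorem IsSelfAdjoint.of_mul_eq_one {R : Type*} [Monoid R] [StarMul R] {a b : R}
    (ha : IsSelfAdjoint a) (h : a * b = 1) : IsSelfAdjoint b :=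
  calc star b = star b * (a * b) := by rw [h, mul_one]
    _ = star (a * b) * b := by rw [star_mul, ha.star_eq, mul_assoc]
    _ = b := by rw [h, star_one, one_mul]

namespace ContinuousLinearMap

section IsInverse

variable {R M N P : Type*} [Semiring R]
  [TopologicalSpace M] [AddCommMonoid M] [Module R M]
  [TopologicalSpace N] [AddCommMonoid N] [Module R N]
  [TopologicalSpace P] [AddCommMonoid P] [Module R P]

def IsInverse (f : M →L[R] N) (g : N →L[R] M) : Prop :=
  f ∘L g = .id R N ∧ g ∘L f = .id R M

theorem IsInverse.symm {f : M →L[R] N} {g : N →L[R] M} (h : IsInverse f g) : IsInverse g f :=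
  And.symm h

theorem IsInverse.comp {f : M →L[R] N} {g : N →L[R] M} {f' : N →L[R] P} {g' : P →L[R] N}
    (h : IsInverse f g) (h' : IsInverse f' g') : IsInverse (f' ∘L f) (g ∘L g') := by
  constructor
  · rw [comp_assoc, ← comp_assoc f, h.1, id_comp, h'.1]
  · rw [comp_assoc, ← comp_assoc g', h'.2, id_comp, h.2]

theorem IsInverse.of_comp_eq_id_of_injective {f : M →L[R] N} {g : N →L[R] M}
    (hf : Function.Injective f) (h : f ∘L g = .id R N) : IsInverse f g :=
  ⟨h, ext fun x => hf (congr($h (f x)))⟩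

theorem isInverse_of_isUnit {u : M →L[R] M} (hu : IsUnit u) : IsInverse u ↑hu.unit⁻¹ :=
  ⟨hu.mul_val_inv, hu.val_inv_mul⟩

theorem IsInverse.isUnit_comp_comp {a : M →L[R] N} {a' : N →L[R] M} {b : N →L[R] M}
    {b' : M →L[R] N} {u : M →L[R] M} (ha : IsInverse a a') (hb : IsInverse b b')
    (hu : IsUnit u) : IsUnit (a ∘L u ∘L b) :=
  have h := (hb.comp (isInverse_of_isUnit hu)).comp ha
  isUnit_iff_exists.mpr ⟨_, h.1, h.2⟩

theorem IsInverse.isUnit_comp_comp_iff {a : M →L[R] N} {a' : N →L[R] M} {b : N →L[R] M}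
    {b' : M →L[R] N} {u : M →L[R] M} (ha : IsInverse a a') (hb : IsInverse b b') :
    IsUnit (a ∘L u ∘L b) ↔ IsUnit u := by
  refine ⟨fun h => ?_, ha.isUnit_comp_comp hb⟩
  have hu : a' ∘L (a ∘L u ∘L b) ∘L b' = u := by
    rw [← comp_assoc, ← comp_assoc, ha.2, id_comp, comp_assoc, hb.1, comp_id]
  exact hu ▸ ha.symm.isUnit_comp_comp hb.symm h

end IsInverse

section Adjoint

variable {𝕜 E F : Type*} [RCLike 𝕜]
  [NormedAddCommGroup E] [InnerProductSpace 𝕜 E] [CompleteSpace E]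
  [NormedAddCommGroup F] [InnerProductSpace 𝕜 F] [CompleteSpace F]

theorem IsInverse.adjoint {f : E →L[𝕜] F} {g : F →L[𝕜] E} (h : IsInverse f g) :
    IsInverse (adjoint f) (adjoint g) :=
  ⟨by rw [← adjoint_comp, h.2, adjoint_id], by rw [← adjoint_comp, h.1, adjoint_id]⟩

theorem adjoint_eq_self_of_self_comp_adjoint_comp_eq_id {T : E →L[𝕜] F} {S : F →L[𝕜] F}
    (h : (T ∘L adjoint T) ∘L S = .id 𝕜 F) : adjoint S = S :=
  isSelfAdjoint_iff'.mp ((isPositive_self_comp_adjoint T).isSelfAdjoint.of_mul_eq_one h)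

variable {T : E →L[𝕜] F} {S : F →L[𝕜] F}

theorem isInverse_adjoint_comp_of_injective (hT : Function.Injective T)
    (h : (T ∘L adjoint T) ∘L S = .id 𝕜 F) : IsInverse T (adjoint (S ∘L T)) := by
  rw [adjoint_comp, adjoint_eq_self_of_self_comp_adjoint_comp_eq_id h]
  exact .of_comp_eq_id_of_injective hT (by rwa [← comp_assoc])

theorem adjoint_isInverse_comp_of_injective (hT : Function.Injective T)
    (h : (T ∘L adjoint T) ∘L S = .id 𝕜 F) : IsInverse (adjoint T) (S ∘L T) := by
  simpa only [adjoint_adjoint] using (isInverse_adjoint_comp_of_injective hT h).adjoint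

end Adjoint

end ContinuousLinearMap

open ContinuousLinearMap

theorem riesz_multiplier_invertible_iff_symbol_invertible_general
    {ι H : Type*} {K : ι → Type*}
    [NormedAddCommGroup H] [InnerProductSpace ℂ H] [CompleteSpace H]
    [∀ i, NormedAddCommGroup (K i)] [∀ i, InnerProductSpace ℂ (K i)]
    [∀ i, CompleteSpace (K i)]
    (TΛ TΓ : lp K 2 →L[ℂ] H)
    (hRieszΛ : Function.Bijective TΛ)
    (hRieszΓ : Function.Bijective TΓ)
    (SΛ' SΓ' : H →L[ℂ] H)
    (hSΛ'₁ : (TΛ.comp (adjoint TΛ)).comp SΛ' = ContinuousLinearMap.id ℂ H)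
    (hSΓ'₁ : (TΓ.comp (adjoint TΓ)).comp SΓ' = ContinuousLinearMap.id ℂ H)
    (U : lp K 2 →L[ℂ] lp K 2) :
    (IsUnit (TΛ.comp (U.comp (adjoint TΓ))) ↔ IsUnit U) ∧
    (∀ U' : lp K 2 →L[ℂ] lp K 2,
      U.comp U' = ContinuousLinearMap.id ℂ (lp K 2) →
      U'.comp U = ContinuousLinearMap.id ℂ (lp K 2) →
      (TΛ.comp (U.comp (adjoint TΓ))).comp
          ((SΓ'.comp TΓ).comp (U'.comp (adjoint (SΛ'.comp TΛ)))) =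
        ContinuousLinearMap.id ℂ H ∧
      ((SΓ'.comp TΓ).comp (U'.comp (adjoint (SΛ'.comp TΛ)))).comp
          (TΛ.comp (U.comp (adjoint TΓ))) =
        ContinuousLinearMap.id ℂ H) := by
  have hΛ := isInverse_adjoint_comp_of_injective hRieszΛ.1 hSΛ'₁
  have hΓ := adjoint_isInverse_comp_of_injective hRieszΓ.1 hSΓ'₁
  exact ⟨hΛ.isUnit_comp_comp_iff hΓ, fun U' h₁ h₂ => hΓ.comp ⟨h₁, h₂⟩ |>.comp hΛ⟩

/-- For g-Riesz bases Λ, Γ, the multiplier M_{U,Λ,Γ} is invertible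
iff U is invertible, and then its inverse is M_{U⁻¹,Γ̃,Λ̃} = T_{Γ̃} U⁻¹ T_{Λ̃}*,
where T_{Λ̃} = S_Λ⁻¹ T_Λ and T_{Γ̃} = S_Γ⁻¹ T_Γ are the canonical duals. -/
theorem riesz_multiplier_invertible_iff_symbol_invertible
    {ι H : Type*} {K : ι → Type*}
    [NormedAddCommGroup H] [InnerProductSpace ℂ H] [CompleteSpace H]
    [∀ i, NormedAddCommGroup (K i)] [∀ i, InnerProductSpace ℂ (K i)]
    [∀ i, CompleteSpace (K i)]
    (Λ Γ : ∀ i, H →L[ℂ] K i)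
    (TΛ TΓ : lp K 2 →L[ℂ] H)
    (hTΛ : ∀ x : H, ∀ i, (adjoint TΛ x) i = Λ i x)
    (hTΓ : ∀ x : H, ∀ i, (adjoint TΓ x) i = Γ i x)
    (hRieszΛ : Function.Bijective TΛ)
    (hRieszΓ : Function.Bijective TΓ)
    (SΛ' SΓ' : H →L[ℂ] H)
    (hSΛ'₁ : (TΛ.comp (adjoint TΛ)).comp SΛ' = ContinuousLinearMap.id ℂ H)
    (hSΛ'₂ : SΛ'.comp (TΛ.comp (adjoint TΛ)) = ContinuousLinearMap.id ℂ H)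
    (hSΓ'₁ : (TΓ.comp (adjoint TΓ)).comp SΓ' = ContinuousLinearMap.id ℂ H)
    (hSΓ'₂ : SΓ'.comp (TΓ.comp (adjoint TΓ)) = ContinuousLinearMap.id ℂ H)
    (U : lp K 2 →L[ℂ] lp K 2) :
    (IsUnit (TΛ.comp (U.comp (adjoint TΓ))) ↔ IsUnit U) ∧
    (∀ U' : lp K 2 →L[ℂ] lp K 2,
      U.comp U' = ContinuousLinearMap.id ℂ (lp K 2) →
      U'.comp U = ContinuousLinearMap.id ℂ (lp K 2) →
      (TΛ.comp (U.comp (adjoint TΓ))).comp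
          ((SΓ'.comp TΓ).comp (U'.comp (adjoint (SΛ'.comp TΛ)))) =
        ContinuousLinearMap.id ℂ H ∧
      ((SΓ'.comp TΓ).comp (U'.comp (adjoint (SΛ'.comp TΛ)))).comp
          (TΛ.comp (U.comp (adjoint TΓ))) =
        ContinuousLinearMap.id ℂ H) :=
  riesz_multiplier_invertible_iff_symbol_invertible_general TΛ TΓ hRieszΛ hRieszΓ SΛ' SΓ' hSΛ'₁
    hSΓ'₁ U
end

section
/- Let Λ and Γ be g-frames for H, U = diag{u_i} semi-normalized (each u_i and the diagonal operator with entries u_i^{-1} bounded invertible), and suppose M := M_{U,Λ,Γ} is invertible. Then Γ† := {u_i* Λ_i (M^{-1})*}_{i∈I} is a dual g-frame of Γ (i.e., T_Γ T_{Γ†}* = Id_H), and for every dual g-frame Λ^d of Λ one has M^{-1} = T_{Γ†} U^{-1} T_{Λ^d}*. -/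
/-!
Put `T_{Γ†} := M⁻¹ T_Λ U`. Its analysis operator `U* T_Λ* (M⁻¹)*` has components
`u_i* Λ_i (M⁻¹)*` because `U*` is again diagonal, and `T_Γ T_{Γ†}* = (M⁻¹ T_Λ U T_Γ*)* = Id`.
An analysis operator with a bounded left inverse `S` is bounded below by `‖S‖⁻¹`, so `Γ†` is a
g-frame. Finally `T_Λ T_{Λᵈ}* = Id` and `U U⁻¹ = Id` give
`M⁻¹ = M⁻¹ T_Λ U U⁻¹ T_{Λᵈ}* = T_{Γ†} U⁻¹ T_{Λᵈ}*`.
-/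

open scoped InnerProductSpace ENNReal
open ContinuousLinearMap

namespace lp

variable {ι : Type*} {E : ι → Type*} [∀ i, NormedAddCommGroup (E i)]

theorem summable_norm_sq (f : lp E 2) : Summable fun i => ‖f i‖ ^ 2 := by
  have := (lp.memℓp f).summable (by norm_num : 0 < (2 : ℝ≥0∞).toReal)
  exact_mod_cast this

theorem norm_sq_eq_tsum_s16 (f : lp E 2) : ‖f‖ ^ 2 = ∑' i, ‖f i‖ ^ 2 := by
  have := lp.norm_rpow_eq_tsum (by norm_num : 0 < (2 : ℝ≥0∞).toReal) f
  exact_mod_cast this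

end lp

section

variable {𝕜 ι : Type*} {E : ι → Type*} [NontriviallyNormedField 𝕜]
  [∀ i, NormedAddCommGroup (E i)] [∀ i, NormedSpace 𝕜 (E i)]

theorem exists_frame_bounds_of_leftInverse {H : Type*} [NormedAddCommGroup H] [NormedSpace 𝕜 H]
    (F : H →L[𝕜] lp E 2) (S : lp E 2 →L[𝕜] H) (hSF : S.comp F = ContinuousLinearMap.id 𝕜 H) :
    ∃ A B : ℝ, 0 < A ∧ ∀ x : H, (Summable fun i => ‖F x i‖ ^ 2) ∧
      A * ‖x‖ ^ 2 ≤ (∑' i, ‖F x i‖ ^ 2) ∧ (∑' i, ‖F x i‖ ^ 2) ≤ B * ‖x‖ ^ 2 := by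
  refine ⟨(‖S‖ ^ 2 + 1)⁻¹, ‖F‖ ^ 2, by positivity, fun x => ⟨lp.summable_norm_sq _, ?_, ?_⟩⟩
  · have hx : ‖x‖ ≤ ‖S‖ * ‖F x‖ := by
      simpa [← comp_apply, hSF] using S.le_opNorm (F x)
    rw [← lp.norm_sq_eq_tsum_s16, inv_mul_le_iff₀ (by positivity)]
    calc ‖x‖ ^ 2 ≤ (‖S‖ * ‖F x‖) ^ 2 := by gcongr
      _ ≤ (‖S‖ ^ 2 + 1) * ‖F x‖ ^ 2 := by nlinarith [sq_nonneg ‖F x‖]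
  · rw [← lp.norm_sq_eq_tsum_s16, ← mul_pow]
    gcongr
    exact F.le_opNorm x

variable {u : ∀ i, E i →L[𝕜] E i} {U : lp E 2 →L[𝕜] lp E 2}

theorem diag_apply_single [DecidableEq ι] (hU : ∀ f : lp E 2, ∀ i, U f i = u i (f i))
    (i : ι) (k : E i) : U (lp.single 2 i k) = lp.single 2 i (u i k) := by
  ext j
  rw [hU]
  by_cases h : j = i
  · subst h; simp
  · simp [Pi.single_eq_of_ne h]

theorem diag_comp_diag_eq_id {u' : ∀ i, E i →L[𝕜] E i} {U' : lp E 2 →L[𝕜] lp E 2}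
    (hU : ∀ f : lp E 2, ∀ i, U f i = u i (f i)) (hU' : ∀ f : lp E 2, ∀ i, U' f i = u' i (f i))
    (hu : ∀ i, (u i).comp (u' i) = ContinuousLinearMap.id 𝕜 (E i)) :
    U.comp U' = ContinuousLinearMap.id 𝕜 (lp E 2) := by
  ext f i
  rw [comp_apply, hU, hU', ← comp_apply, hu, id_apply, id_apply]

end

theorem adjoint_diag_apply {𝕜 ι : Type*} {K : ι → Type*} [RCLike 𝕜]
    [∀ i, NormedAddCommGroup (K i)] [∀ i, InnerProductSpace 𝕜 (K i)] [∀ i, CompleteSpace (K i)]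
    {u : ∀ i, K i →L[𝕜] K i} {U : lp K 2 →L[𝕜] lp K 2}
    (hU : ∀ f : lp K 2, ∀ i, U f i = u i (f i)) (g : lp K 2) (i : ι) :
    adjoint U g i = adjoint (u i) (g i) := by
  classical
  refine ext_inner_right 𝕜 fun k => ?_
  rw [adjoint_inner_left, ← lp.inner_single_right, adjoint_inner_left, diag_apply_single hU,
    lp.inner_single_right]

theorem inverse_multiplier_representation_general
    {ι H : Type*} {K : ι → Type*}
    [NormedAddCommGroup H] [InnerProductSpace ℂ H] [CompleteSpace H]
    [∀ i, NormedAddCommGroup (K i)] [∀ i, InnerProductSpace ℂ (K i)]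
    [∀ i, CompleteSpace (K i)]
    (Λ : ∀ i, H →L[ℂ] K i)
    (TΛ TΓ : lp K 2 →L[ℂ] H)
    (hTΛ : ∀ x : H, ∀ i, (adjoint TΛ x) i = Λ i x)
    -- semi-normalized diagonal symbol U with diagonal inverse U'
    (u u' : ∀ i, K i →L[ℂ] K i)
    (hu : ∀ i, (u i).comp (u' i) = ContinuousLinearMap.id ℂ (K i) ∧
      (u' i).comp (u i) = ContinuousLinearMap.id ℂ (K i))
    (U U' : lp K 2 →L[ℂ] lp K 2)
    (hU : ∀ f : lp K 2, ∀ i, (U f) i = u i (f i))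
    (hU' : ∀ f : lp K 2, ∀ i, (U' f) i = u' i (f i))
    -- M and its inverse M'
    (M' : H →L[ℂ] H)
    (hM'₂ : M'.comp (TΛ.comp (U.comp (adjoint TΓ))) = ContinuousLinearMap.id ℂ H)
    -- the sequence Γ† := {u_i* ∘ Λ_i ∘ (M⁻¹)*}
    (Γd : ∀ i, H →L[ℂ] K i)
    (hΓd : ∀ x : H, ∀ i, Γd i x = adjoint (u i) (Λ i (adjoint M' x))) :
    ∃ TΓd : lp K 2 →L[ℂ] H,
      (∀ x : H, ∀ i, (adjoint TΓd x) i = Γd i x) ∧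
      -- Γ† is a g-frame
      (∃ A B : ℝ, 0 < A ∧ ∀ x : H, (Summable fun i => ‖Γd i x‖ ^ 2) ∧
        A * ‖x‖ ^ 2 ≤ (∑' i, ‖Γd i x‖ ^ 2) ∧ (∑' i, ‖Γd i x‖ ^ 2) ≤ B * ‖x‖ ^ 2) ∧
      -- Γ† is a dual g-frame of Γ
      TΓ.comp (adjoint TΓd) = ContinuousLinearMap.id ℂ H ∧
      -- M⁻¹ = T_{Γ†} U⁻¹ T_{Λᵈ}* for every dual g-frame Λᵈ of Λ
      (∀ (Λd : ∀ i, H →L[ℂ] K i) (TΛd : lp K 2 →L[ℂ] H),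
        (∀ x : H, ∀ i, (adjoint TΛd x) i = Λd i x) →
        TΛ.comp (adjoint TΛd) = ContinuousLinearMap.id ℂ H →
        M' = TΓd.comp (U'.comp (adjoint TΛd))) := by
  have hanalysis : ∀ x i, adjoint (M'.comp (TΛ.comp U)) x i = Γd i x := fun x i => by
    simp only [adjoint_comp, comp_apply, adjoint_diag_apply hU, hTΛ, hΓd]
  have hdual : TΓ.comp (adjoint (M'.comp (TΛ.comp U))) = ContinuousLinearMap.id ℂ H := by
    rw [← adjoint_adjoint TΓ, ← adjoint_comp, ← adjoint_id, ← hM'₂]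
    simp only [comp_assoc]
  refine ⟨M'.comp (TΛ.comp U), hanalysis, ?_, hdual, fun Λd TΛd _ hΛd => ?_⟩
  · simpa only [hanalysis] using exists_frame_bounds_of_leftInverse _ _ hdual
  · calc M' = M'.comp (TΛ.comp ((U.comp U').comp (adjoint TΛd))) := by
          rw [diag_comp_diag_eq_id hU hU' fun i => (hu i).1, id_comp, hΛd, comp_id]
      _ = (M'.comp (TΛ.comp U)).comp (U'.comp (adjoint TΛd)) := by simp only [comp_assoc]

/-- For g-frames Λ, Γ, a semi-normalized diagonal symbol U, and an
invertible multiplier M, the sequence Γ† = {u_i* Λ_i (M⁻¹)*} is a dual g-frame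
of Γ and M⁻¹ = T_{Γ†} U⁻¹ T_{Λᵈ}* for every dual g-frame Λᵈ of Λ. -/
theorem inverse_multiplier_representation
    {ι H : Type*} {K : ι → Type*}
    [NormedAddCommGroup H] [InnerProductSpace ℂ H] [CompleteSpace H]
    [∀ i, NormedAddCommGroup (K i)] [∀ i, InnerProductSpace ℂ (K i)]
    [∀ i, CompleteSpace (K i)]
    (Λ Γ : ∀ i, H →L[ℂ] K i) (AΛ BΛ AΓ BΓ : ℝ) (hAΛ : 0 < AΛ) (hAΓ : 0 < AΓ)
    (hsumΛ : ∀ x : H, Summable fun i => ‖Λ i x‖ ^ 2)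
    (hframeΛ : ∀ x : H, AΛ * ‖x‖ ^ 2 ≤ (∑' i, ‖Λ i x‖ ^ 2) ∧
      (∑' i, ‖Λ i x‖ ^ 2) ≤ BΛ * ‖x‖ ^ 2)
    (hsumΓ : ∀ x : H, Summable fun i => ‖Γ i x‖ ^ 2)
    (hframeΓ : ∀ x : H, AΓ * ‖x‖ ^ 2 ≤ (∑' i, ‖Γ i x‖ ^ 2) ∧
      (∑' i, ‖Γ i x‖ ^ 2) ≤ BΓ * ‖x‖ ^ 2)
    (TΛ TΓ : lp K 2 →L[ℂ] H)
    (hTΛ : ∀ x : H, ∀ i, (adjoint TΛ x) i = Λ i x)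
    (hTΓ : ∀ x : H, ∀ i, (adjoint TΓ x) i = Γ i x)
    -- semi-normalized diagonal symbol U with diagonal inverse U'
    (u u' : ∀ i, K i →L[ℂ] K i)
    (hu : ∀ i, (u i).comp (u' i) = ContinuousLinearMap.id ℂ (K i) ∧
      (u' i).comp (u i) = ContinuousLinearMap.id ℂ (K i))
    (U U' : lp K 2 →L[ℂ] lp K 2)
    (hU : ∀ f : lp K 2, ∀ i, (U f) i = u i (f i))
    (hU' : ∀ f : lp K 2, ∀ i, (U' f) i = u' i (f i))
    -- M and its inverse M'
    (M' : H →L[ℂ] H)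
    (hM'₁ : (TΛ.comp (U.comp (adjoint TΓ))).comp M' = ContinuousLinearMap.id ℂ H)
    (hM'₂ : M'.comp (TΛ.comp (U.comp (adjoint TΓ))) = ContinuousLinearMap.id ℂ H)
    -- the sequence Γ† := {u_i* ∘ Λ_i ∘ (M⁻¹)*}
    (Γd : ∀ i, H →L[ℂ] K i)
    (hΓd : ∀ x : H, ∀ i, Γd i x = adjoint (u i) (Λ i (adjoint M' x))) :
    ∃ TΓd : lp K 2 →L[ℂ] H,
      (∀ x : H, ∀ i, (adjoint TΓd x) i = Γd i x) ∧
      -- Γ† is a g-frame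
      (∃ A B : ℝ, 0 < A ∧ ∀ x : H, (Summable fun i => ‖Γd i x‖ ^ 2) ∧
        A * ‖x‖ ^ 2 ≤ (∑' i, ‖Γd i x‖ ^ 2) ∧ (∑' i, ‖Γd i x‖ ^ 2) ≤ B * ‖x‖ ^ 2) ∧
      -- Γ† is a dual g-frame of Γ
      TΓ.comp (adjoint TΓd) = ContinuousLinearMap.id ℂ H ∧
      -- M⁻¹ = T_{Γ†} U⁻¹ T_{Λᵈ}* for every dual g-frame Λᵈ of Λ
      (∀ (Λd : ∀ i, H →L[ℂ] K i) (TΛd : lp K 2 →L[ℂ] H),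
        (∀ x : H, ∀ i, (adjoint TΛd x) i = Λd i x) →
        TΛ.comp (adjoint TΛd) = ContinuousLinearMap.id ℂ H →
        M' = TΓd.comp (U'.comp (adjoint TΛd))) :=
  inverse_multiplier_representation_general Λ TΛ TΓ hTΛ u u' hu U U' hU hU' M' hM'₂ Γd hΓd
end

section
/- Let Λ be a g-frame for H with lower bound A_Λ, Λ^d a dual g-frame of Λ, U = diag{u_i} bounded, and Γ = {Γ_i} a sequence with Γ_i ∈ B(H, K_i). Assume (1) λ := Σ_i ‖Λ_i − Γ_i‖² < ∞ and (2) μ := Σ_i ‖Λ_i − u_i*Γ_i‖·‖Λ_i^d‖ < 1. Then M := Σ_i Γ_i* u_i Λ_i^d defines a bounded invertible operator on H with (1+μ)^{-1}‖x‖ ≤ ‖M^{-1}x‖ ≤ (1−μ)^{-1}‖x‖ for all x ∈ H, and Γ is a g-frame for H. -/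
/-!
Put `T i := Λ i - (u i)* Γ i`. Since `∑ (Λ i)* Λd i = 1`, the operator `M = ∑ (Γ i)* u i Λd i`
equals `1 - D` with `D = ∑ (T i)* Λd i`, a series converging in operator norm with
`‖D‖ ≤ μ < 1`; so `M` is invertible by the Neumann series and
`(1 - μ) ‖y‖ ≤ ‖M y‖ ≤ (1 + μ) ‖y‖`. The upper g-frame bound of `Γ` comes from
`‖Γ i x‖² ≤ 2 ‖Λ i - Γ i‖² ‖x‖² + 2 ‖Λ i x‖²`. For the lower one, expand
`‖x‖² = ⟪x, M (M⁻¹ x)⟫ = ∑ ⟪Γ i x, u i Λd i M⁻¹ x⟫` and apply Cauchy–Schwarz in `ℓ²`.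
-/

open scoped InnerProductSpace
open ContinuousLinearMap

theorem Real.summable_and_tsum_mul_le_sqrt_mul_sqrt {ι : Type*} {f g : ι → ℝ}
    (hf : ∀ i, 0 ≤ f i) (hg : ∀ i, 0 ≤ g i)
    (hf_sum : Summable fun i => f i ^ 2) (hg_sum : Summable fun i => g i ^ 2) :
    (Summable fun i => f i * g i) ∧
      ∑' i, f i * g i ≤ √(∑' i, f i ^ 2) * √(∑' i, g i ^ 2) := by
  simp_rw [← Real.rpow_two] at hf_sum hg_sum ⊢
  simpa only [Real.sqrt_eq_rpow] using
    Real.summable_and_inner_le_Lp_mul_Lq_tsum_of_nonneg Real.HolderConjugate.two_two hf hg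
      hf_sum hg_sum

theorem sq_le_sq_mul_of_sq_le_mul_sqrt {a k s : ℝ} (ha : 0 ≤ a) (hs : 0 ≤ s)
    (h : a ^ 2 ≤ k * a * √s) : a ^ 2 ≤ k ^ 2 * s := by
  rcases ha.eq_or_lt with rfl | ha
  · simpa using mul_nonneg (sq_nonneg k) hs
  have hle : a ≤ k * √s := by nlinarith
  calc a ^ 2 ≤ (k * √s) ^ 2 := pow_le_pow_left₀ ha.le hle 2
    _ = k ^ 2 * s := by rw [mul_pow, Real.sq_sqrt hs]

section Normed

variable {ι 𝕜 E F : Type*} [NontriviallyNormedField 𝕜]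
  [NormedAddCommGroup E] [NormedSpace 𝕜 E] [NormedAddCommGroup F] [NormedSpace 𝕜 F]

theorem ContinuousLinearMap.exists_norm_le_hasSum_apply [CompleteSpace F]
    {f : ι → E →L[𝕜] F} {c : ι → ℝ} {μ : ℝ} (hc : HasSum c μ) (hf : ∀ i, ‖f i‖ ≤ c i) :
    ∃ D : E →L[𝕜] F, ‖D‖ ≤ μ ∧ ∀ x, HasSum (fun i => f i x) (D x) :=
  ⟨∑' i, f i, tsum_of_norm_bounded hc hf,
    fun x => (Summable.of_norm_bounded hc.summable hf).hasSum.mapL (apply 𝕜 F x)⟩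

theorem Units.oneSub_inv_apply_norm_bounds [CompleteSpace E] {D : E →L[𝕜] E} {μ : ℝ}
    (hD : ‖D‖ ≤ μ) (hμ : μ < 1) (x : E) :
    (1 + μ)⁻¹ * ‖x‖ ≤ ‖(↑(Units.oneSub D (hD.trans_lt hμ))⁻¹ : E →L[𝕜] E) x‖ ∧
      ‖(↑(Units.oneSub D (hD.trans_lt hμ))⁻¹ : E →L[𝕜] E) x‖ ≤ (1 - μ)⁻¹ * ‖x‖ := by
  set y := (↑(Units.oneSub D (hD.trans_lt hμ))⁻¹ : E →L[𝕜] E) x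
  have hx : x = y - D y := by
    have := congrArg (· x) (Units.oneSub D (hD.trans_lt hμ)).mul_inv
    simpa [Units.val_oneSub, y] using this.symm
  have hDy : ‖D y‖ ≤ μ * ‖y‖ := (le_opNorm D y).trans (by gcongr)
  have hμ0 : 0 ≤ μ := (norm_nonneg D).trans hD
  constructor
  · rw [inv_mul_le_iff₀ (by linarith), hx]
    linarith [norm_sub_le y (D y)]
  · rw [le_inv_mul_iff₀ (by linarith), hx]
    linarith [norm_sub_norm_le y (D y)]

def IsGBessel {K : ι → Type*} [∀ i, NormedAddCommGroup (K i)] [∀ i, NormedSpace 𝕜 (K i)]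
    (Λ : ∀ i, E →L[𝕜] K i) (B : ℝ) : Prop :=
  ∀ x, (Summable fun i => ‖Λ i x‖ ^ 2) ∧ ∑' i, ‖Λ i x‖ ^ 2 ≤ B * ‖x‖ ^ 2

theorem IsGBessel.of_hasSum_norm_sub_sq {K : ι → Type*} [∀ i, NormedAddCommGroup (K i)]
    [∀ i, NormedSpace 𝕜 (K i)] {Λ Γ : ∀ i, E →L[𝕜] K i} {B lam : ℝ} (hΛ : IsGBessel Λ B)
    (hlam : HasSum (fun i => ‖Λ i - Γ i‖ ^ 2) lam) :
    IsGBessel Γ (2 * lam + 2 * B) := by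
  intro x
  have hpt : ∀ i, ‖Γ i x‖ ^ 2 ≤ 2 * (‖Λ i - Γ i‖ ^ 2 * ‖x‖ ^ 2) + 2 * ‖Λ i x‖ ^ 2 := fun i =>
    calc ‖Γ i x‖ ^ 2 ≤ (‖Λ i - Γ i‖ * ‖x‖ + ‖Λ i x‖) ^ 2 := by
          gcongr
          calc ‖Γ i x‖ = ‖Λ i x - (Λ i - Γ i) x‖ := by simp
            _ ≤ ‖Λ i x‖ + ‖(Λ i - Γ i) x‖ := norm_sub_le _ _
            _ ≤ ‖Λ i - Γ i‖ * ‖x‖ + ‖Λ i x‖ := by linarith [le_opNorm (Λ i - Γ i) x]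
      _ ≤ 2 * ((‖Λ i - Γ i‖ * ‖x‖) ^ 2 + ‖Λ i x‖ ^ 2) := add_sq_le
      _ = _ := by ring
  have hmaj := ((hlam.mul_right (‖x‖ ^ 2)).mul_left 2).add ((hΛ x).1.hasSum.mul_left 2)
  have hsum : Summable fun i => ‖Γ i x‖ ^ 2 :=
    hmaj.summable.of_nonneg_of_le (fun i => sq_nonneg _) hpt
  refine ⟨hsum, ?_⟩
  calc ∑' i, ‖Γ i x‖ ^ 2 ≤ 2 * (lam * ‖x‖ ^ 2) + 2 * ∑' i, ‖Λ i x‖ ^ 2 :=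
        hasSum_le hpt hsum.hasSum hmaj
    _ ≤ (2 * lam + 2 * B) * ‖x‖ ^ 2 := by linarith [(hΛ x).2]

end Normed

section InnerProduct

variable {ι 𝕜 H : Type*} [RCLike 𝕜] [NormedAddCommGroup H] [InnerProductSpace 𝕜 H]
  [CompleteSpace H] {K : ι → Type*} [∀ i, NormedAddCommGroup (K i)]
  [∀ i, InnerProductSpace 𝕜 (K i)] [∀ i, CompleteSpace (K i)]

theorem ContinuousLinearMap.norm_adjoint_comp_le {F G : Type*} [NormedAddCommGroup F]
    [InnerProductSpace 𝕜 F] [CompleteSpace F] [NormedAddCommGroup G] [InnerProductSpace 𝕜 G]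
    [CompleteSpace G] (T : H →L[𝕜] F) (S : G →L[𝕜] F) :
    ‖(adjoint T).comp S‖ ≤ ‖T‖ * ‖S‖ :=
  (opNorm_comp_le _ _).trans_eq (by rw [LinearIsometryEquiv.norm_map])

theorem hasSum_adjoint_apply_sub {Λ Λd Γ : ∀ i, H →L[𝕜] K i} {u : ∀ i, K i →L[𝕜] K i} {x y : H}
    (hdual : HasSum (fun i => adjoint (Λ i) (Λd i x)) x)
    (hD : HasSum (fun i => adjoint (Λ i - (adjoint (u i)).comp (Γ i)) (Λd i x)) y) :
    HasSum (fun i => adjoint (Γ i) (u i (Λd i x))) (x - y) := by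
  convert hdual.sub hD using 1
  ext i
  simp [map_sub, adjoint_comp]

theorem sq_norm_le_of_hasSum_adjoint {Λd Γ : ∀ i, H →L[𝕜] K i} {u : ∀ i, K i →L[𝕜] K i}
    {C B : ℝ} (hu : ∀ i, ‖u i‖ ≤ C) (hC : 0 ≤ C) (hd : IsGBessel Λd B) {x y : H}
    (hx : HasSum (fun i => adjoint (Γ i) (u i (Λd i y))) x)
    (hΓ : Summable fun i => ‖Γ i x‖ ^ 2) :
    ‖x‖ ^ 2 ≤ C * √B * ‖y‖ * √(∑' i, ‖Γ i x‖ ^ 2) := by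
  have hre : HasSum (fun i => RCLike.re ⟪Γ i x, u i (Λd i y)⟫_𝕜) (‖x‖ ^ 2) := by
    simpa [adjoint_inner_right, inner_self_eq_norm_sq] using
      (hx.mapL (innerSL 𝕜 x)).mapL (RCLike.reCLM (K := 𝕜))
  have hpt : ∀ i, RCLike.re ⟪Γ i x, u i (Λd i y)⟫_𝕜 ≤ C * (‖Λd i y‖ * ‖Γ i x‖) := fun i =>
    calc RCLike.re ⟪Γ i x, u i (Λd i y)⟫_𝕜 ≤ ‖Γ i x‖ * ‖u i (Λd i y)‖ :=
          (RCLike.re_le_norm _).trans (norm_inner_le_norm _ _)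
      _ ≤ ‖Γ i x‖ * (C * ‖Λd i y‖) := by
          gcongr
          exact (le_opNorm _ _).trans (mul_le_mul_of_nonneg_right (hu i) (norm_nonneg _))
      _ = C * (‖Λd i y‖ * ‖Γ i x‖) := by ring
  obtain ⟨hsum, hcs⟩ := Real.summable_and_tsum_mul_le_sqrt_mul_sqrt
    (fun i => norm_nonneg (Λd i y)) (fun i => norm_nonneg (Γ i x)) (hd y).1 hΓ
  have hΛd : √(∑' i, ‖Λd i y‖ ^ 2) ≤ √B * ‖y‖ := by
    rw [← Real.sqrt_sq (norm_nonneg y), ← Real.sqrt_mul' _ (sq_nonneg _)]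
    exact Real.sqrt_le_sqrt (hd y).2
  calc ‖x‖ ^ 2 ≤ C * ∑' i, ‖Λd i y‖ * ‖Γ i x‖ := by
        rw [← tsum_mul_left]
        exact hasSum_le hpt hre (hsum.mul_left C).hasSum
    _ ≤ C * (√B * ‖y‖ * √(∑' i, ‖Γ i x‖ ^ 2)) := by
        gcongr
        exact hcs.trans (mul_le_mul_of_nonneg_right hΛd (Real.sqrt_nonneg _))
    _ = C * √B * ‖y‖ * √(∑' i, ‖Γ i x‖ ^ 2) := by ring

theorem exists_pos_mul_sq_norm_le_tsum_of_rightInverse {Λd Γ : ∀ i, H →L[𝕜] K i}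
    {u : ∀ i, K i →L[𝕜] K i} {C B : ℝ} (hu : ∀ i, ‖u i‖ ≤ C) (hC : 0 ≤ C) (hd : IsGBessel Λd B)
    (hΓ : ∀ x, Summable fun i => ‖Γ i x‖ ^ 2) (R : H →L[𝕜] H)
    (hR : ∀ x, HasSum (fun i => adjoint (Γ i) (u i (Λd i (R x)))) x) :
    ∃ A, 0 < A ∧ ∀ x, A * ‖x‖ ^ 2 ≤ ∑' i, ‖Γ i x‖ ^ 2 := by
  set k := C * √B * ‖R‖
  refine ⟨(k ^ 2 + 1)⁻¹, by positivity, fun x => ?_⟩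
  have hS : 0 ≤ ∑' i, ‖Γ i x‖ ^ 2 := tsum_nonneg fun i => sq_nonneg _
  have hx : ‖x‖ ^ 2 ≤ k * ‖x‖ * √(∑' i, ‖Γ i x‖ ^ 2) :=
    calc ‖x‖ ^ 2 ≤ C * √B * ‖R x‖ * √(∑' i, ‖Γ i x‖ ^ 2) :=
          sq_norm_le_of_hasSum_adjoint hu hC hd (hR x) (hΓ x)
      _ ≤ C * √B * (‖R‖ * ‖x‖) * √(∑' i, ‖Γ i x‖ ^ 2) := by gcongr; exact le_opNorm R x
      _ = k * ‖x‖ * √(∑' i, ‖Γ i x‖ ^ 2) := by ring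
  rw [inv_mul_le_iff₀ (by positivity)]
  nlinarith [sq_le_sq_mul_of_sq_le_mul_sqrt (norm_nonneg x) hS hx]

end InnerProduct

theorem perturbation_invertible_multiplier_general
    {ι H : Type*} {K : ι → Type*}
    [NormedAddCommGroup H] [InnerProductSpace ℂ H] [CompleteSpace H]
    [∀ i, NormedAddCommGroup (K i)] [∀ i, InnerProductSpace ℂ (K i)]
    [∀ i, CompleteSpace (K i)]
    (Λ Λd Γ : ∀ i, H →L[ℂ] K i) (AΛ BΛ Ad Bd : ℝ)
    -- Λ is a g-frame with bounds AΛ, BΛ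
    (hsumΛ : ∀ x : H, Summable fun i => ‖Λ i x‖ ^ 2)
    (hframeΛ : ∀ x : H, AΛ * ‖x‖ ^ 2 ≤ (∑' i, ‖Λ i x‖ ^ 2) ∧
      (∑' i, ‖Λ i x‖ ^ 2) ≤ BΛ * ‖x‖ ^ 2)
    -- Λd is a g-frame with bounds Ad, Bd, dual to Λ
    (hsumd : ∀ x : H, Summable fun i => ‖Λd i x‖ ^ 2)
    (hframed : ∀ x : H, Ad * ‖x‖ ^ 2 ≤ (∑' i, ‖Λd i x‖ ^ 2) ∧
      (∑' i, ‖Λd i x‖ ^ 2) ≤ Bd * ‖x‖ ^ 2)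
    (hdual : ∀ x : H, HasSum (fun i => adjoint (Λ i) (Λd i x)) x)
    -- the diagonal symbol
    (u : ∀ i, K i →L[ℂ] K i) (Cu : ℝ) (hCu : ∀ i, ‖u i‖ ≤ Cu)
    -- conditions (1) and (2)
    (lam mu : ℝ)
    (hlam : HasSum (fun i => ‖Λ i - Γ i‖ ^ 2) lam)
    (hmu : HasSum (fun i => ‖Λ i - (adjoint (u i)).comp (Γ i)‖ * ‖Λd i‖) mu)
    (hmu1 : mu < 1) :
    (∃ M M' : H →L[ℂ] H,
      (∀ x : H, HasSum (fun i => adjoint (Γ i) (u i (Λd i x))) (M x)) ∧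
      M.comp M' = ContinuousLinearMap.id ℂ H ∧
      M'.comp M = ContinuousLinearMap.id ℂ H ∧
      ∀ x : H, (1 + mu)⁻¹ * ‖x‖ ≤ ‖M' x‖ ∧ ‖M' x‖ ≤ (1 - mu)⁻¹ * ‖x‖) ∧
    (∃ A B : ℝ, 0 < A ∧ ∀ x : H, (Summable fun i => ‖Γ i x‖ ^ 2) ∧
      A * ‖x‖ ^ 2 ≤ (∑' i, ‖Γ i x‖ ^ 2) ∧ (∑' i, ‖Γ i x‖ ^ 2) ≤ B * ‖x‖ ^ 2) := by
  obtain ⟨D, hDnorm, hD⟩ := exists_norm_le_hasSum_apply hmu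
    fun i => norm_adjoint_comp_le (Λ i - (adjoint (u i)).comp (Γ i)) (Λd i)
  set W := Units.oneSub D (hDnorm.trans_lt hmu1)
  have hM : ∀ x, HasSum (fun i => adjoint (Γ i) (u i (Λd i x))) ((W : H →L[ℂ] H) x) := fun x => by
    simpa [W, Units.val_oneSub] using hasSum_adjoint_apply_sub (hdual x) (hD x)
  have hWW : ∀ x, (W : H →L[ℂ] H) ((↑W⁻¹ : H →L[ℂ] H) x) = x := fun x =>
    congrArg (· x) W.mul_inv
  have hR : ∀ x, HasSum (fun i => adjoint (Γ i) (u i (Λd i ((↑W⁻¹ : H →L[ℂ] H) x)))) x :=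
    fun x => by simpa only [hWW] using hM ((↑W⁻¹ : H →L[ℂ] H) x)
  have hΓ : IsGBessel Γ (2 * lam + 2 * BΛ) :=
    IsGBessel.of_hasSum_norm_sub_sq (fun x => ⟨hsumΛ x, (hframeΛ x).2⟩) hlam
  obtain ⟨A, hA, hΓlow⟩ := exists_pos_mul_sq_norm_le_tsum_of_rightInverse
    (fun i => (hCu i).trans (le_max_left Cu 0)) (le_max_right Cu 0)
    (fun x => ⟨hsumd x, (hframed x).2⟩) (fun x => (hΓ x).1) _ hR
  exact ⟨⟨W, ↑W⁻¹, hM, W.mul_inv, W.inv_mul, Units.oneSub_inv_apply_norm_bounds hDnorm hmu1⟩,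
    A, _, hA, fun x => ⟨(hΓ x).1, hΓlow x, (hΓ x).2⟩⟩

/-- Perturbation result: if λ := Σ‖Λ_i − Γ_i‖² < ∞ and
μ := Σ‖Λ_i − u_i*Γ_i‖‖Λ_iᵈ‖ < 1, then M = Σ Γ_i* u_i Λ_iᵈ is a bounded
invertible operator with (1+μ)⁻¹‖x‖ ≤ ‖M⁻¹x‖ ≤ (1−μ)⁻¹‖x‖, and Γ is a
g-frame. -/
theorem perturbation_invertible_multiplier
    {ι H : Type*} {K : ι → Type*}
    [NormedAddCommGroup H] [InnerProductSpace ℂ H] [CompleteSpace H]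
    [∀ i, NormedAddCommGroup (K i)] [∀ i, InnerProductSpace ℂ (K i)]
    [∀ i, CompleteSpace (K i)]
    (Λ Λd Γ : ∀ i, H →L[ℂ] K i) (AΛ BΛ Ad Bd : ℝ) (hAΛ : 0 < AΛ) (hAd : 0 < Ad)
    -- Λ is a g-frame with bounds AΛ, BΛ
    (hsumΛ : ∀ x : H, Summable fun i => ‖Λ i x‖ ^ 2)
    (hframeΛ : ∀ x : H, AΛ * ‖x‖ ^ 2 ≤ (∑' i, ‖Λ i x‖ ^ 2) ∧
      (∑' i, ‖Λ i x‖ ^ 2) ≤ BΛ * ‖x‖ ^ 2)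
    -- Λd is a g-frame with bounds Ad, Bd, dual to Λ
    (hsumd : ∀ x : H, Summable fun i => ‖Λd i x‖ ^ 2)
    (hframed : ∀ x : H, Ad * ‖x‖ ^ 2 ≤ (∑' i, ‖Λd i x‖ ^ 2) ∧
      (∑' i, ‖Λd i x‖ ^ 2) ≤ Bd * ‖x‖ ^ 2)
    (hdual : ∀ x : H, HasSum (fun i => adjoint (Λ i) (Λd i x)) x)
    -- the diagonal symbol
    (u : ∀ i, K i →L[ℂ] K i) (Cu : ℝ) (hCu : ∀ i, ‖u i‖ ≤ Cu)
    -- conditions (1) and (2)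
    (lam mu : ℝ)
    (hlam : HasSum (fun i => ‖Λ i - Γ i‖ ^ 2) lam)
    (hmu : HasSum (fun i => ‖Λ i - (adjoint (u i)).comp (Γ i)‖ * ‖Λd i‖) mu)
    (hmu1 : mu < 1) :
    (∃ M M' : H →L[ℂ] H,
      (∀ x : H, HasSum (fun i => adjoint (Γ i) (u i (Λd i x))) (M x)) ∧
      M.comp M' = ContinuousLinearMap.id ℂ H ∧
      M'.comp M = ContinuousLinearMap.id ℂ H ∧
      ∀ x : H, (1 + mu)⁻¹ * ‖x‖ ≤ ‖M' x‖ ∧ ‖M' x‖ ≤ (1 - mu)⁻¹ * ‖x‖) ∧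
    (∃ A B : ℝ, 0 < A ∧ ∀ x : H, (Summable fun i => ‖Γ i x‖ ^ 2) ∧
      A * ‖x‖ ^ 2 ≤ (∑' i, ‖Γ i x‖ ^ 2) ∧ (∑' i, ‖Γ i x‖ ^ 2) ≤ B * ‖x‖ ^ 2) :=
  perturbation_invertible_multiplier_general Λ Λd Γ AΛ BΛ Ad Bd hsumΛ hframeΛ hsumd hframed hdual u
    Cu hCu lam mu hlam hmu hmu1
end
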